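/- arXiv:2009.13405 — 8 statements merged into one kernel-verified Lean document; each statement's English description precedes it below -/
import Mathlib

section
/- Let p and q be probability distributions on a finite set S and let V : S → ℝ be any function. Then (E_{s~q}[V(s)] − E_{s~p}[V(s)])² ≤ 8·KL(p‖q)·Var_{s~p}[V] + 4√2·KL(p‖q)^{3/2}·MD_p[V]², where Var_p[V] is the variance of V under p and MD_p[V] = max_s |V(s) − E_{s~p}[V]|. -/
open Finset Real

/-!
With `μ = E_p[V]`, the difference of means is `∑ (q - p) (V - μ)`. Factoring
`q - p = (√q - √p) (√q + √p)`, Cauchy–Schwarz bounds its square by the squared Hellinger distance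
`H = ∑ (√p - √q)²` times `2 ∑ (p + q) (V - μ)²`. The `q`-part of that sum exceeds the variance by
at most `‖q - p‖₁ · MD²`, and the same Cauchy–Schwarz argument gives `‖q - p‖₁ ≤ 2 √H`. Hence the
square is at most `4 H Var + 4 H^{3/2} MD²`, and `H ≤ KL` because `log x ≥ 1 - 1/x`.
-/

section Hellinger

variable {ι : Type*} [Fintype ι]

noncomputable def hellingerSq (p q : ι → ℝ) : ℝ := ∑ i, (√(p i) - √(q i)) ^ 2

theorem hellingerSq_nonneg (p q : ι → ℝ) : 0 ≤ hellingerSq p q :=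
  sum_nonneg fun _ _ => sq_nonneg _

theorem sq_sqrt_sub_sqrt_le_mul_log_div_add_sub {a b : ℝ} (ha : 0 ≤ a) (hb : 0 ≤ b)
    (hab : 0 < a → 0 < b) : (√a - √b) ^ 2 ≤ a * log (a / b) + (b - a) := by
  rcases ha.eq_or_lt with rfl | ha
  · simp [sq_sqrt hb]
  have hsa : 0 < √a := sqrt_pos.mpr ha
  have hsb : 0 < √b := sqrt_pos.mpr (hab ha)
  have hlog : log (a / b) = 2 * log (√a / √b) := by
    rw [← sq_sqrt ha.le, ← sq_sqrt hb, ← div_pow, log_pow, sqrt_sq hsa.le, sqrt_sq hsb.le]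
    norm_num
  have hlower : 1 - √b / √a ≤ log (√a / √b) := by
    simpa only [inv_div] using one_sub_inv_le_log_of_pos (div_pos hsa hsb)
  have hkey : 2 * (a - √a * √b) ≤ a * log (a / b) := by
    have hmul : a * (1 - √b / √a) = a - √a * √b := by
      field_simp
      linear_combination √b * mul_self_sqrt ha.le
    rw [hlog, ← hmul]
    nlinarith
  rw [sub_sq, sq_sqrt ha.le, sq_sqrt hb]
  linarith

theorem hellingerSq_le_sum_mul_log_div {p q : ι → ℝ} (hp : ∀ i, 0 ≤ p i) (hq : ∀ i, 0 ≤ q i)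
    (hpq : ∀ i, 0 < p i → 0 < q i) (hsum : ∑ i, p i = ∑ i, q i) :
    hellingerSq p q ≤ ∑ i, p i * log (p i / q i) :=
  calc hellingerSq p q ≤ ∑ i, (p i * log (p i / q i) + (q i - p i)) :=
        sum_le_sum fun i _ => sq_sqrt_sub_sqrt_le_mul_log_div_add_sub (hp i) (hq i) (hpq i)
    _ = ∑ i, p i * log (p i / q i) := by
        rw [sum_add_distrib, sum_sub_distrib, hsum, sub_self, add_zero]

theorem sq_sum_abs_sub_mul_abs_le {p q : ι → ℝ} (hp : ∀ i, 0 ≤ p i) (hq : ∀ i, 0 ≤ q i)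
    (W : ι → ℝ) :
    (∑ i, |q i - p i| * |W i|) ^ 2 ≤ 2 * hellingerSq p q * ∑ i, (p i + q i) * W i ^ 2 := by
  have hfactor : ∀ i, |q i - p i| * |W i| = |√(p i) - √(q i)| * ((√(p i) + √(q i)) * |W i|) := by
    intro i
    have hdiff : q i - p i = -((√(p i) - √(q i)) * (√(p i) + √(q i))) := by
      linear_combination sq_sqrt (hp i) - sq_sqrt (hq i)
    rw [hdiff, abs_neg, abs_mul, abs_of_nonneg (by positivity : 0 ≤ √(p i) + √(q i)), mul_assoc]
  have hsq : ∀ i, ((√(p i) + √(q i)) * |W i|) ^ 2 ≤ 2 * ((p i + q i) * W i ^ 2) := by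
    intro i
    rw [mul_pow, sq_abs, ← mul_assoc]
    gcongr
    nlinarith [sq_sqrt (hp i), sq_sqrt (hq i), sq_nonneg (√(p i) - √(q i))]
  calc (∑ i, |q i - p i| * |W i|) ^ 2
      = (∑ i, |√(p i) - √(q i)| * ((√(p i) + √(q i)) * |W i|)) ^ 2 := by simp_rw [hfactor]
    _ ≤ (∑ i, |√(p i) - √(q i)| ^ 2) * ∑ i, ((√(p i) + √(q i)) * |W i|) ^ 2 :=
        sum_mul_sq_le_sq_mul_sq _ _ _
    _ ≤ hellingerSq p q * ∑ i, 2 * ((p i + q i) * W i ^ 2) := by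
        simp_rw [sq_abs]
        exact mul_le_mul_of_nonneg_left (sum_le_sum fun i _ => hsq i) (hellingerSq_nonneg p q)
    _ = 2 * hellingerSq p q * ∑ i, (p i + q i) * W i ^ 2 := by rw [← mul_sum]; ring

variable {p q : ι → ℝ} (hp : ∀ i, 0 ≤ p i) (hq : ∀ i, 0 ≤ q i)
  (hp1 : ∑ i, p i = 1) (hq1 : ∑ i, q i = 1)
include hp hq hp1 hq1

theorem sum_abs_sub_le_two_mul_sqrt_hellingerSq :
    ∑ i, |q i - p i| ≤ 2 * √(hellingerSq p q) := by
  have h := sq_sum_abs_sub_mul_abs_le hp hq fun _ => 1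
  simp only [abs_one, mul_one, one_pow, sum_add_distrib, hp1, hq1] at h
  rw [← pow_le_pow_iff_left₀ (sum_nonneg fun i _ => abs_nonneg _) (by positivity) two_ne_zero,
    mul_pow, sq_sqrt (hellingerSq_nonneg p q)]
  linarith

theorem sq_sum_sub_mul_le_hellingerSq {W : ι → ℝ} {D : ℝ} (hWD : ∀ i, |W i| ≤ D) :
    (∑ i, (q i - p i) * W i) ^ 2
      ≤ 4 * hellingerSq p q * ∑ i, p i * W i ^ 2
        + 4 * hellingerSq p q ^ ((3 : ℝ) / 2) * D ^ 2 := by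
  set H := hellingerSq p q
  have hH : 0 ≤ H := hellingerSq_nonneg p q
  have hshift : ∑ i, (q i - p i) * W i ^ 2 ≤ 2 * √H * D ^ 2 :=
    calc ∑ i, (q i - p i) * W i ^ 2 ≤ ∑ i, |q i - p i| * D ^ 2 := by
          refine sum_le_sum fun i _ => ?_
          rw [← sq_abs (W i)]
          gcongr
          exacts [le_abs_self _, hWD i]
      _ = (∑ i, |q i - p i|) * D ^ 2 := by rw [sum_mul]
      _ ≤ 2 * √H * D ^ 2 := by
          gcongr
          exact sum_abs_sub_le_two_mul_sqrt_hellingerSq hp hq hp1 hq1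
  have hrpow : H ^ ((3 : ℝ) / 2) = H * √H := by
    rw [show (3 : ℝ) / 2 = 1 + 1 / 2 by norm_num, rpow_add' hH (by norm_num), rpow_one,
      sqrt_eq_rpow]
  calc (∑ i, (q i - p i) * W i) ^ 2 ≤ (∑ i, |q i - p i| * |W i|) ^ 2 := by
        have h : |∑ i, (q i - p i) * W i| ≤ ∑ i, |q i - p i| * |W i| := by
          simpa only [abs_mul] using abs_sum_le_sum_abs (fun i => (q i - p i) * W i) univ
        exact sq_le_sq.mpr (h.trans (le_abs_self _))
    _ ≤ 2 * H * ∑ i, (p i + q i) * W i ^ 2 := sq_sum_abs_sub_mul_abs_le hp hq W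
    _ = 2 * H * (2 * ∑ i, p i * W i ^ 2 + ∑ i, (q i - p i) * W i ^ 2) := by
        congr 1
        rw [mul_sum, ← sum_add_distrib]
        exact sum_congr rfl fun i _ => by ring
    _ ≤ 2 * H * (2 * ∑ i, p i * W i ^ 2 + 2 * √H * D ^ 2) := by gcongr
    _ = _ := by rw [hrpow]; ring

end Hellinger

/-- second-moment bound relating the difference of expectations of `V` under
`q` and `p` to the KL divergence, variance, and maximum deviation under `p`. -/
theorem mean_diff_sq_le_kl_var_md {S : Type*} [Fintype S] [Nonempty S]
    (p q : S → ℝ) (hp0 : ∀ s, 0 ≤ p s) (hp1 : ∑ s, p s = 1)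
    (hq0 : ∀ s, 0 ≤ q s) (hq1 : ∑ s, q s = 1)
    (habs : ∀ s, 0 < p s → 0 < q s)
    (V : S → ℝ) :
    ((∑ s, q s * V s) - ∑ s, p s * V s) ^ 2
      ≤ 8 * (∑ s, p s * Real.log (p s / q s))
            * (∑ s, p s * (V s - ∑ t, p t * V t) ^ 2)
        + 4 * Real.sqrt 2 * (∑ s, p s * Real.log (p s / q s)) ^ ((3 : ℝ) / 2)
            * (Finset.univ.sup' Finset.univ_nonempty
                (fun s => |V s - ∑ t, p t * V t|)) ^ 2 := by
  set μ := ∑ t, p t * V t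
  set K := ∑ s, p s * Real.log (p s / q s)
  set D := Finset.univ.sup' Finset.univ_nonempty fun s => |V s - μ|
  set H := hellingerSq p q
  have hmean : (∑ s, q s * V s) - ∑ s, p s * V s = ∑ s, (q s - p s) * (V s - μ) := by
    simp only [mul_sub, sub_mul, sum_sub_distrib, ← sum_mul, hp1, hq1]
    ring
  have hHK : H ≤ K := hellingerSq_le_sum_mul_log_div hp0 hq0 habs (hp1.trans hq1.symm)
  have hH : 0 ≤ H := hellingerSq_nonneg p q
  have hVar : 0 ≤ ∑ s, p s * (V s - μ) ^ 2 :=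
    sum_nonneg fun s _ => mul_nonneg (hp0 s) (sq_nonneg _)
  have hsqrt2 : 1 ≤ √2 := one_le_sqrt.mpr (by norm_num)
  rw [hmean]
  calc (∑ s, (q s - p s) * (V s - μ)) ^ 2
      ≤ 4 * H * ∑ s, p s * (V s - μ) ^ 2 + 4 * H ^ ((3 : ℝ) / 2) * D ^ 2 :=
        sq_sum_sub_mul_le_hellingerSq hp0 hq0 hp1 hq1 fun s =>
          le_sup' (fun s => |V s - μ|) (mem_univ s)
    _ ≤ 8 * K * ∑ s, p s * (V s - μ) ^ 2 + 4 * √2 * K ^ ((3 : ℝ) / 2) * D ^ 2 := by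
        gcongr
        · norm_num
        · linarith
end

section
/- Let (ρ_i)_{1≤i≤4} be nonnegative reals and Σ₄ the simplex of nonnegative 4-vectors summing to 1. Then the statement 'for every α ∈ Σ₄ there exists i with ρ_i < α_i²' holds if and only if Σ_{i=1}^{4} √ρ_i < 1. -/
open Finset Real

/-- for nonnegative `ρ₁,…,ρ₄`, "every `α` in the 4-simplex has some coordinate
with `ρ i < α i ^ 2`" holds iff `Σ √ρ i < 1`. -/
theorem forall_simplex_exists_lt_sq_iff_sum_sqrt_lt_one
    (ρ : Fin 4 → ℝ) (hρ : ∀ i, 0 ≤ ρ i) :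
    (∀ α : Fin 4 → ℝ, (∀ i, 0 ≤ α i) → (∑ i, α i) = 1 → ∃ i, ρ i < (α i) ^ 2)
      ↔ (∑ i, Real.sqrt (ρ i)) < 1 := by
  constructor
  · intro h
    by_contra hs
    push_neg at hs
    set s := ∑ i, Real.sqrt (ρ i) with hsdef
    have hs1 : 1 ≤ s := hs
    have hspos : 0 < s := lt_of_lt_of_le one_pos hs1
    obtain ⟨i, hi⟩ := h (fun i => Real.sqrt (ρ i) / s)
      (fun i => div_nonneg (Real.sqrt_nonneg _) hspos.le)
      (by rw [← Finset.sum_div, ← hsdef, div_self hspos.ne'])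
    have : (Real.sqrt (ρ i) / s) ^ 2 ≤ ρ i := by
      rw [div_pow, Real.sq_sqrt (hρ i)]
      apply div_le_self (hρ i)
      nlinarith
    linarith
  · intro hs α hα hαs
    by_contra h
    push_neg at h
    have : ∀ i, α i ≤ Real.sqrt (ρ i) := fun i =>
      (Real.le_sqrt (hα i) (hρ i)).mpr (h i)
    have := Finset.sum_le_sum (fun i (_ : i ∈ Finset.univ) => this i)
    linarith [hαs ▸ this]
end

section
/- In a discounted MDP φ with rewards in [0,1] and discount factor γ ∈ [0,1), suppose the optimal policy π* is unique. Then the minimum suboptimality gap satisfies Δ_min ≤ 1, where Δ_min = min over states s and actions a ≠ π*(s) of V*_φ(s) − Q*_φ(s,a). -/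
open Finset Real

/-- in a discounted MDP with rewards in `[0,1]` and a unique optimal policy,
the minimum suboptimality gap is at most `1`, i.e. some suboptimal pair has gap `≤ 1`. -/
theorem min_gap_le_one {S A : Type*} [Fintype S] [Fintype A] [Nonempty S] [Nonempty A]
    (r : S → A → ℝ) (hr : ∀ s a, r s a ∈ Set.Icc (0 : ℝ) 1)
    (p : S → A → S → ℝ) (hp0 : ∀ s a s', 0 ≤ p s a s') (hp1 : ∀ s a, ∑ s', p s a s' = 1)
    (γ : ℝ) (hγ0 : 0 ≤ γ) (hγ1 : γ < 1)
    (Q : S → A → ℝ) (V : S → ℝ)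
    (hV : ∀ s, V s = Finset.univ.sup' Finset.univ_nonempty (Q s))
    (hQ : ∀ s a, Q s a = r s a + γ * ∑ s', p s a s' * V s')
    (πstar : S → A)
    (hopt : ∀ s, Q s (πstar s) = V s)
    (huniq : ∀ s a, Q s a = V s → a = πstar s)
    (hA : 1 < Fintype.card A) :
    ∃ s a, a ≠ πstar s ∧ V s - Q s a ≤ 1 := by
  have : Nontrivial A := Fintype.one_lt_card_iff_nontrivial.mp hA
  -- max and min states
  obtain ⟨M, hM⟩ := Finite.exists_max V
  obtain ⟨m, hm⟩ := Finite.exists_min V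
  obtain ⟨a, ha⟩ := exists_ne (πstar m)
  refine ⟨m, a, ha, ?_⟩
  -- (1-γ) * V M ≤ 1
  have hVM : V M ≤ 1 + γ * V M := by
    have h1 : ∑ s', p M (πstar M) s' * V s' ≤ V M := by
      calc ∑ s', p M (πstar M) s' * V s'
          ≤ ∑ s', p M (πstar M) s' * V M := by
            apply Finset.sum_le_sum
            intro s' _
            exact mul_le_mul_of_nonneg_left (hM s') (hp0 _ _ _)
        _ = V M := by rw [← Finset.sum_mul, hp1, one_mul]
    calc V M = Q M (πstar M) := (hopt M).symm
      _ = r M (πstar M) + γ * ∑ s', p M (πstar M) s' * V s' := hQ _ _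
      _ ≤ 1 + γ * V M := by
          gcongr
          · exact (hr M (πstar M)).2
  have hVM1 : (1 - γ) * V M ≤ 1 := by nlinarith
  -- Q m a ≥ γ * V m
  have hQa : γ * V m ≤ Q m a := by
    have h1 : V m ≤ ∑ s', p m a s' * V s' := by
      calc V m = ∑ s', p m a s' * V m := by rw [← Finset.sum_mul, hp1, one_mul]
        _ ≤ ∑ s', p m a s' * V s' := by
            apply Finset.sum_le_sum
            intro s' _
            exact mul_le_mul_of_nonneg_left (hm s') (hp0 _ _ _)
    have := (hr m a).1
    rw [hQ]
    nlinarith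
  have hVmM : V m ≤ V M := hM m
  nlinarith
end

section
/- Let φ and ψ be two finite discounted MDPs on the same state and action spaces with discount γ ∈ [0,1), rewards in [0,1]. Then the optimal Q-functions satisfy ‖Q*_φ − Q*_ψ‖_∞ ≤ (1 + 1/(1−γ))·(‖r_φ − r_ψ‖_∞ + (γ/(1−γ))·‖p_φ − p_ψ‖_{1,∞}), where ‖p_φ − p_ψ‖_{1,∞} = max_{(s,a)} Σ_{s'} |p_φ(s'|s,a) − p_ψ(s'|s,a)|. -/
open Finset Real

lemma abs_sup'_sub_sup' {α : Type*} [Fintype α] [Nonempty α] (f g : α → ℝ) :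
    |Finset.univ.sup' Finset.univ_nonempty f - Finset.univ.sup' Finset.univ_nonempty g|
      ≤ Finset.univ.sup' Finset.univ_nonempty (fun a => |f a - g a|) := by
  rw [abs_sub_le_iff]
  constructor <;>
  · rw [sub_le_iff_le_add]
    apply Finset.sup'_le
    intro b _
    have h1 : |f b - g b| ≤ Finset.univ.sup' Finset.univ_nonempty (fun a => |f a - g a|) :=
      Finset.le_sup' (fun a => |f a - g a|) (Finset.mem_univ b)
    have h2 : g b ≤ Finset.univ.sup' Finset.univ_nonempty g :=
      Finset.le_sup' g (Finset.mem_univ b)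
    have h3 : f b ≤ Finset.univ.sup' Finset.univ_nonempty f :=
      Finset.le_sup' f (Finset.mem_univ b)
    have ha := le_abs_self (f b - g b)
    have hb := neg_abs_le (f b - g b)
    linarith

/-- Lipschitz continuity of the optimal Q-function with respect to rewards
and transition kernels:
`‖Q*_φ − Q*_ψ‖_∞ ≤ (1 + 1/(1−γ))·(‖r_φ − r_ψ‖_∞ + (γ/(1−γ))·‖p_φ − p_ψ‖_{1,∞})`. -/
theorem optimal_Q_lipschitz {S A : Type*} [Fintype S] [Fintype A] [Nonempty S] [Nonempty A]
    (γ : ℝ) (hγ0 : 0 ≤ γ) (hγ1 : γ < 1)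
    (rφ rψ : S → A → ℝ)
    (hrφ : ∀ s a, rφ s a ∈ Set.Icc (0 : ℝ) 1) (hrψ : ∀ s a, rψ s a ∈ Set.Icc (0 : ℝ) 1)
    (pφ pψ : S → A → S → ℝ)
    (hpφ0 : ∀ s a s', 0 ≤ pφ s a s') (hpφ1 : ∀ s a, ∑ s', pφ s a s' = 1)
    (hpψ0 : ∀ s a s', 0 ≤ pψ s a s') (hpψ1 : ∀ s a, ∑ s', pψ s a s' = 1)
    (Qφ Qψ : S → A → ℝ)
    (hQφ : ∀ s a, Qφ s a
      = rφ s a + γ * ∑ s', pφ s a s' * Finset.univ.sup' Finset.univ_nonempty (Qφ s'))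
    (hQψ : ∀ s a, Qψ s a
      = rψ s a + γ * ∑ s', pψ s a s' * Finset.univ.sup' Finset.univ_nonempty (Qψ s')) :
    (Finset.univ.sup' Finset.univ_nonempty
        (fun sa : S × A => |Qφ sa.1 sa.2 - Qψ sa.1 sa.2|))
      ≤ (1 + 1 / (1 - γ))
        * ((Finset.univ.sup' Finset.univ_nonempty
              (fun sa : S × A => |rφ sa.1 sa.2 - rψ sa.1 sa.2|))
          + (γ / (1 - γ))
            * (Finset.univ.sup' Finset.univ_nonempty
                (fun sa : S × A => ∑ s', |pφ sa.1 sa.2 s' - pψ sa.1 sa.2 s'|))) := by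
  have hγ : (0:ℝ) < 1 - γ := by linarith
  set D := Finset.univ.sup' Finset.univ_nonempty
      (fun sa : S × A => |Qφ sa.1 sa.2 - Qψ sa.1 sa.2|) with hDdef
  set Δr := Finset.univ.sup' Finset.univ_nonempty
      (fun sa : S × A => |rφ sa.1 sa.2 - rψ sa.1 sa.2|) with hΔrdef
  set Δp := Finset.univ.sup' Finset.univ_nonempty
      (fun sa : S × A => ∑ s', |pφ sa.1 sa.2 s' - pψ sa.1 sa.2 s'|) with hΔpdef
  set M := Finset.univ.sup' Finset.univ_nonempty
      (fun sa : S × A => |Qφ sa.1 sa.2|) with hMdef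
  set Vφ := fun s => Finset.univ.sup' Finset.univ_nonempty (Qφ s) with hVφdef
  set Vψ := fun s => Finset.univ.sup' Finset.univ_nonempty (Qψ s) with hVψdef
  -- basic bounds
  have hMle : ∀ s a, |Qφ s a| ≤ M := fun s a =>
    Finset.le_sup' (fun sa : S × A => |Qφ sa.1 sa.2|) (Finset.mem_univ (s, a))
  have hDle : ∀ s a, |Qφ s a - Qψ s a| ≤ D := fun s a =>
    Finset.le_sup' (fun sa : S × A => |Qφ sa.1 sa.2 - Qψ sa.1 sa.2|) (Finset.mem_univ (s, a))
  have hΔrle : ∀ s a, |rφ s a - rψ s a| ≤ Δr := fun s a =>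
    Finset.le_sup' (fun sa : S × A => |rφ sa.1 sa.2 - rψ sa.1 sa.2|) (Finset.mem_univ (s, a))
  have hΔple : ∀ s a, ∑ s', |pφ s a s' - pψ s a s'| ≤ Δp := fun s a =>
    Finset.le_sup' (fun sa : S × A => ∑ s', |pφ sa.1 sa.2 s' - pψ sa.1 sa.2 s'|)
      (Finset.mem_univ (s, a))
  have hVφle : ∀ s, |Vφ s| ≤ M := by
    intro s
    obtain ⟨a, _, ha⟩ := Finset.exists_mem_eq_sup' Finset.univ_nonempty (Qφ s)
    rw [hVφdef]; simp only; rw [ha]; exact hMle s a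
  have hVD : ∀ s, |Vφ s - Vψ s| ≤ D := by
    intro s
    have h := abs_sup'_sub_sup' (Qφ s) (Qψ s)
    refine h.trans (Finset.sup'_le _ _ fun a _ => hDle s a)
  have hD0 : 0 ≤ D := (abs_nonneg _).trans (hDle (Classical.arbitrary S) (Classical.arbitrary A))
  have hΔr0 : 0 ≤ Δr := (abs_nonneg _).trans (hΔrle (Classical.arbitrary S) (Classical.arbitrary A))
  have hΔp0 : 0 ≤ Δp := le_trans (Finset.sum_nonneg fun _ _ => abs_nonneg _)
    (hΔple (Classical.arbitrary S) (Classical.arbitrary A))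
  have hM0 : 0 ≤ M := (abs_nonneg _).trans (hMle (Classical.arbitrary S) (Classical.arbitrary A))
  -- bound M ≤ 1/(1-γ)
  have hMbound : M * (1 - γ) ≤ 1 := by
    obtain ⟨⟨s, a⟩, _, hsa⟩ := Finset.exists_mem_eq_sup' Finset.univ_nonempty
      (fun sa : S × A => |Qφ sa.1 sa.2|)
    have hsum : |∑ s', pφ s a s' * Vφ s'| ≤ M := by
      calc |∑ s', pφ s a s' * Vφ s'| ≤ ∑ s', |pφ s a s' * Vφ s'| :=
            Finset.abs_sum_le_sum_abs _ _
        _ ≤ ∑ s', pφ s a s' * M := by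
            refine Finset.sum_le_sum fun s' _ => ?_
            rw [abs_mul, abs_of_nonneg (hpφ0 s a s')]
            exact mul_le_mul_of_nonneg_left (hVφle s') (hpφ0 s a s')
        _ = M := by rw [← Finset.sum_mul, hpφ1 s a, one_mul]
    have hrb : |rφ s a| ≤ 1 := by
      rw [abs_of_nonneg (hrφ s a).1]; exact (hrφ s a).2
    have hQb : |Qφ s a| ≤ 1 + γ * M := by
      rw [hQφ s a]
      calc |rφ s a + γ * ∑ s', pφ s a s' * Vφ s'|
          ≤ |rφ s a| + |γ * ∑ s', pφ s a s' * Vφ s'| := abs_add_le _ _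
        _ ≤ 1 + γ * M := by
            rw [abs_mul, abs_of_nonneg hγ0]
            exact add_le_add hrb (mul_le_mul_of_nonneg_left hsum hγ0)
    rw [hMdef, hsa] at *
    nlinarith
  -- fixed point inequality for D
  have hDbound : D * (1 - γ) ≤ Δr + γ * (M * Δp) := by
    obtain ⟨⟨s, a⟩, _, hsa⟩ := Finset.exists_mem_eq_sup' Finset.univ_nonempty
      (fun sa : S × A => |Qφ sa.1 sa.2 - Qψ sa.1 sa.2|)
    have key : |Qφ s a - Qψ s a| ≤ Δr + γ * (M * Δp + D) := by
      rw [hQφ s a, hQψ s a]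
      have hsplit : rφ s a + γ * ∑ s', pφ s a s' * Vφ s'
          - (rψ s a + γ * ∑ s', pψ s a s' * Vψ s')
          = (rφ s a - rψ s a)
            + γ * ((∑ s', (pφ s a s' - pψ s a s') * Vφ s')
                 + (∑ s', pψ s a s' * (Vφ s' - Vψ s'))) := by
        have hs : (∑ s', (pφ s a s' - pψ s a s') * Vφ s')
            + (∑ s', pψ s a s' * (Vφ s' - Vψ s'))
            = (∑ s', pφ s a s' * Vφ s') - (∑ s', pψ s a s' * Vψ s') := by
          rw [← Finset.sum_add_distrib, ← Finset.sum_sub_distrib]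
          exact Finset.sum_congr rfl fun s' _ => by ring
        rw [hs]; ring
      rw [hsplit]
      have h1 : |∑ s', (pφ s a s' - pψ s a s') * Vφ s'| ≤ M * Δp := by
        calc |∑ s', (pφ s a s' - pψ s a s') * Vφ s'|
            ≤ ∑ s', |(pφ s a s' - pψ s a s') * Vφ s'| := Finset.abs_sum_le_sum_abs _ _
          _ ≤ ∑ s', |pφ s a s' - pψ s a s'| * M := by
              refine Finset.sum_le_sum fun s' _ => ?_
              rw [abs_mul]
              exact mul_le_mul_of_nonneg_left (hVφle s') (abs_nonneg _)
          _ = (∑ s', |pφ s a s' - pψ s a s'|) * M := by rw [Finset.sum_mul]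
          _ ≤ Δp * M := mul_le_mul_of_nonneg_right (hΔple s a) hM0
          _ = M * Δp := mul_comm _ _
      have h2 : |∑ s', pψ s a s' * (Vφ s' - Vψ s')| ≤ D := by
        calc |∑ s', pψ s a s' * (Vφ s' - Vψ s')|
            ≤ ∑ s', |pψ s a s' * (Vφ s' - Vψ s')| := Finset.abs_sum_le_sum_abs _ _
          _ ≤ ∑ s', pψ s a s' * D := by
              refine Finset.sum_le_sum fun s' _ => ?_
              rw [abs_mul, abs_of_nonneg (hpψ0 s a s')]
              exact mul_le_mul_of_nonneg_left (hVD s') (hpψ0 s a s')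
          _ = D := by rw [← Finset.sum_mul, hpψ1 s a, one_mul]
      calc |(rφ s a - rψ s a)
            + γ * ((∑ s', (pφ s a s' - pψ s a s') * Vφ s')
                 + (∑ s', pψ s a s' * (Vφ s' - Vψ s')))|
          ≤ |rφ s a - rψ s a|
            + |γ * ((∑ s', (pφ s a s' - pψ s a s') * Vφ s')
                 + (∑ s', pψ s a s' * (Vφ s' - Vψ s')))| := abs_add_le _ _
        _ ≤ Δr + γ * (M * Δp + D) := by
            rw [abs_mul, abs_of_nonneg hγ0]
            refine add_le_add (hΔrle s a) (mul_le_mul_of_nonneg_left ?_ hγ0)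
            exact (abs_add_le _ _).trans (add_le_add h1 h2)
    have hD' : D = |Qφ s a - Qψ s a| := hsa
    rw [hD'] at *
    nlinarith
  -- conclude
  have hγMΔp : γ * (M * Δp) ≤ γ / (1 - γ) * Δp := by
    have : M ≤ 1 / (1 - γ) := by
      rw [le_div_iff₀ hγ]; linarith
    calc γ * (M * Δp) ≤ γ * (1 / (1 - γ) * Δp) := by
          refine mul_le_mul_of_nonneg_left (mul_le_mul_of_nonneg_right this hΔp0) hγ0
      _ = γ / (1 - γ) * Δp := by ring
  have hB0 : 0 ≤ Δr + γ / (1 - γ) * Δp := by positivity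
  have hc : (1 - γ) * (1 / (1 - γ)) = 1 := by field_simp
  have hD2 : D * (1 - γ) ≤ Δr + γ / (1 - γ) * Δp := hDbound.trans (by linarith)
  nlinarith [mul_le_mul_of_nonneg_right hD2 (le_of_lt (one_div_pos.mpr hγ)),
    mul_nonneg hB0 (le_of_lt (one_div_pos.mpr hγ))]
end

section
/- Conversely, let φ be a discounted MDP with unique optimal policy π* and let s, a ≠ π*(s). If ψ is an MDP such that Q^{π*}_ψ(s,a) > V^{π*}_ψ(s), then π* is not an optimal policy of ψ. Hence Alt(φ) = ⋃_{s, a≠π*(s)} {ψ : Q^{π*}_ψ(s,a) > V^{π*}_ψ(s)}, where Alt(φ) is the set of MDPs whose set of optimal policies does not contain π*. -/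
open Finset

/-! Changing `π*` to `a` at `s` gives a policy `π₁` whose Bellman operator `T` satisfies
`V^{π*}_ψ ≤ T V^{π*}_ψ`, strictly at `s`. The difference `D = V^{π₁}_ψ - V^{π*}_ψ` then satisfies
`D ≥ γ P D` for the stochastic matrix `P` of `π₁`, and evaluating this at a minimiser of `D`
shows `D ≥ 0` since `γ < 1`; at `s` the strict gap makes `D s > 0`. -/

section BellmanOperator

variable {S : Type*} [Fintype S] {γ : ℝ} {r : S → ℝ} {P : S → S → ℝ}

def bellmanOp (γ : ℝ) (r : S → ℝ) (P : S → S → ℝ) (V : S → ℝ) : S → ℝ :=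
  fun t => r t + γ * ∑ t', P t t' * V t'

theorem bellmanOp_sub_bellmanOp (V W : S → ℝ) (t : S) :
    bellmanOp γ r P V t - bellmanOp γ r P W t = γ * ∑ t', P t t' * (V t' - W t') := by
  simp only [bellmanOp, mul_sub, sum_sub_distrib]
  ring

theorem abs_sum_mul_le_dist (hP0 : ∀ t t', 0 ≤ P t t') (hP1 : ∀ t, ∑ t', P t t' = 1)
    (V W : S → ℝ) (t : S) : |∑ t', P t t' * (V t' - W t')| ≤ dist V W :=
  calc |∑ t', P t t' * (V t' - W t')|
      ≤ ∑ t', P t t' * |V t' - W t'| := by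
        refine (abs_sum_le_sum_abs _ _).trans_eq (sum_congr rfl fun t' _ => ?_)
        rw [abs_mul, abs_of_nonneg (hP0 t t')]
    _ ≤ ∑ t', P t t' * dist V W := by
        gcongr with t' _
        · exact hP0 t t'
        · exact dist_le_pi_dist V W t'
    _ = dist V W := by rw [← sum_mul, hP1, one_mul]

theorem contractingWith_bellmanOp (hγ0 : 0 ≤ γ) (hγ1 : γ < 1)
    (hP0 : ∀ t t', 0 ≤ P t t') (hP1 : ∀ t, ∑ t', P t t' = 1) :
    ContractingWith ⟨γ, hγ0⟩ (bellmanOp γ r P) := by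
  refine ⟨by exact_mod_cast hγ1, LipschitzWith.of_dist_le_mul fun V W => ?_⟩
  refine (dist_pi_le_iff (by positivity)).2 fun t => ?_
  rw [Real.dist_eq, bellmanOp_sub_bellmanOp, abs_mul, abs_of_nonneg hγ0]
  exact mul_le_mul_of_nonneg_left (abs_sum_mul_le_dist hP0 hP1 V W t) hγ0

theorem nonneg_of_discounted_average_le (hγ0 : 0 ≤ γ) (hγ1 : γ < 1)
    (hP0 : ∀ t t', 0 ≤ P t t') (hP1 : ∀ t, ∑ t', P t t' = 1) {D : S → ℝ}
    (hD : ∀ t, γ * ∑ t', P t t' * D t' ≤ D t) (t : S) : 0 ≤ D t := by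
  obtain ⟨t₀, -, ht₀⟩ := exists_min_image univ D ⟨t, mem_univ t⟩
  have haverage : D t₀ ≤ ∑ t', P t₀ t' * D t' :=
    calc D t₀ = ∑ t', P t₀ t' * D t₀ := by rw [← sum_mul, hP1, one_mul]
      _ ≤ ∑ t', P t₀ t' * D t' := by
        gcongr with t' ht'
        · exact hP0 t₀ t'
        · exact ht₀ t' ht'
  have hmin : 0 ≤ D t₀ := by nlinarith [hD t₀, mul_le_mul_of_nonneg_left haverage hγ0]
  exact hmin.trans (ht₀ t (mem_univ t))

theorem lt_of_le_bellmanOp_of_isFixedPt (hγ0 : 0 ≤ γ) (hγ1 : γ < 1)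
    (hP0 : ∀ t t', 0 ≤ P t t') (hP1 : ∀ t, ∑ t', P t t' = 1) {V W : S → ℝ}
    (hW : Function.IsFixedPt (bellmanOp γ r P) W) (hV : ∀ t, V t ≤ bellmanOp γ r P V t)
    {s : S} (hs : V s < bellmanOp γ r P V s) : V s < W s := by
  have hgap : ∀ t, γ * ∑ t', P t t' * (W t' - V t') + (bellmanOp γ r P V t - V t)
      = W t - V t := fun t => by
    rw [← bellmanOp_sub_bellmanOp, congrFun hW t]
    ring
  have hle : ∀ t, 0 ≤ W t - V t := nonneg_of_discounted_average_le hγ0 hγ1 hP0 hP1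
    fun t => by linarith [hgap t, hV t]
  have hsum : 0 ≤ ∑ t', P s t' * (W t' - V t') :=
    sum_nonneg fun t' _ => mul_nonneg (hP0 s t') (hle t')
  nlinarith [hgap s, mul_nonneg hγ0 hsum]

end BellmanOperator

theorem pistar_not_optimal_of_Q_gt_V_general {S A : Type*}
    [Fintype S] [DecidableEq S]
    (γ : ℝ) (hγ0 : 0 ≤ γ) (hγ1 : γ < 1)
    (rψ : S → A → ℝ)
    (pψ : S → A → S → ℝ) (hp0 : ∀ s a s', 0 ≤ pψ s a s') (hp1 : ∀ s a, ∑ s', pψ s a s' = 1)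
    (πstar : S → A)
    (Vψ : S → ℝ) (Qψ : S → A → ℝ)
    (hVψ : ∀ s, Vψ s = rψ s (πstar s) + γ * ∑ s', pψ s (πstar s) s' * Vψ s')
    (hQψ : ∀ s a, Qψ s a = rψ s a + γ * ∑ s', pψ s a s' * Vψ s')
    (s : S) (a : A)
    (hgt : Qψ s a > Vψ s) :
    ∃ (π' : S → A) (V' : S → ℝ),
      (∀ s', V' s' = rψ s' (π' s') + γ * ∑ s'', pψ s' (π' s') s'' * V' s'')
      ∧ ∃ s', Vψ s' < V' s' := by
  set π₁ := Function.update πstar s a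
  set T := bellmanOp γ (fun t => rψ t (π₁ t)) (fun t => pψ t (π₁ t))
  have hP0 : ∀ t t', 0 ≤ pψ t (π₁ t) t' := fun t => hp0 t (π₁ t)
  have hP1 : ∀ t, ∑ t', pψ t (π₁ t) t' = 1 := fun t => hp1 t (π₁ t)
  have hc := contractingWith_bellmanOp (r := fun t => rψ t (π₁ t)) hγ0 hγ1 hP0 hP1
  have hTs : T Vψ s = Qψ s a := by simp [T, bellmanOp, π₁, hQψ]
  have hstrict : Vψ s < T Vψ s := hTs ▸ hgt
  have hsub : ∀ t, Vψ t ≤ T Vψ t := fun t => by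
    by_cases ht : t = s
    · exact ht ▸ hstrict.le
    · simp [T, bellmanOp, π₁, Function.update_of_ne ht, ← hVψ t]
  refine ⟨π₁, hc.fixedPoint T, fun t => (congrFun hc.fixedPoint_isFixedPt t).symm, s, ?_⟩
  exact lt_of_le_bellmanOp_of_isFixedPt hγ0 hγ1 hP0 hP1 hc.fixedPoint_isFixedPt hsub hstrict

/-- conversely, if `Q^{π*}_ψ(s,a) > V^{π*}_ψ(s)` for some state `s` and some
action `a ≠ π*(s)`, then `π*` is not an optimal policy of `ψ`: some deterministic policy has
a value function that strictly exceeds `V^{π*}_ψ` at some state. -/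
theorem pistar_not_optimal_of_Q_gt_V {S A : Type*}
    [Fintype S] [Fintype A] [Nonempty S] [Nonempty A] [DecidableEq S]
    (γ : ℝ) (hγ0 : 0 ≤ γ) (hγ1 : γ < 1)
    (rψ : S → A → ℝ)
    (pψ : S → A → S → ℝ) (hp0 : ∀ s a s', 0 ≤ pψ s a s') (hp1 : ∀ s a, ∑ s', pψ s a s' = 1)
    (πstar : S → A)
    (Vψ : S → ℝ) (Qψ : S → A → ℝ)
    (hVψ : ∀ s, Vψ s = rψ s (πstar s) + γ * ∑ s', pψ s (πstar s) s' * Vψ s')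
    (hQψ : ∀ s a, Qψ s a = rψ s a + γ * ∑ s', pψ s a s' * Vψ s')
    (s : S) (a : A) (ha : a ≠ πstar s)
    (hgt : Qψ s a > Vψ s) :
    ∃ (π' : S → A) (V' : S → ℝ),
      (∀ s', V' s' = rψ s' (π' s') + γ * ∑ s'', pψ s' (π' s') s'' * V' s'')
      ∧ ∃ s', Vψ s' < V' s' :=
  pistar_not_optimal_of_Q_gt_V_general γ hγ0 hγ1 rψ pψ hp0 hp1 πstar Vψ Qψ hVψ hQψ s a hgt
end

section
/- Let φ be a discounted MDP with unique optimal policy π*. If for all s and all a ≠ π*(s) we have V*_φ(s) − Q*_φ(s,a) > 1, then for any deterministic policy π with π(s) ≠ π*(s) for all s, one has V^π_φ(s) < V*_φ(s) − 1/(1−γ) for all s, hence V^π_φ(s) < 0, contradicting nonnegativity of values when rewards are in [0,1]. -/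
open Finset

/-- in a discounted MDP with rewards in `[0,1]`, if every suboptimal action has
gap strictly greater than `1`, then the existence of a nonnegative-valued policy avoiding
`π*` at every state is contradictory. -/
theorem no_policy_avoiding_pistar_of_gaps_gt_one {S A : Type*}
    [Fintype S] [Fintype A] [Nonempty S] [Nonempty A]
    (r : S → A → ℝ) (hr : ∀ s a, r s a ∈ Set.Icc (0 : ℝ) 1)
    (p : S → A → S → ℝ) (hp0 : ∀ s a s', 0 ≤ p s a s') (hp1 : ∀ s a, ∑ s', p s a s' = 1)
    (γ : ℝ) (hγ0 : 0 ≤ γ) (hγ1 : γ < 1)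
    (Q : S → A → ℝ) (V : S → ℝ)
    (hV : ∀ s, V s = Finset.univ.sup' Finset.univ_nonempty (Q s))
    (hQ : ∀ s a, Q s a = r s a + γ * ∑ s', p s a s' * V s')
    (πstar : S → A)
    (hopt : ∀ s, Q s (πstar s) = V s)
    (huniq : ∀ s a, Q s a = V s → a = πstar s)
    (π : S → A) (hπ : ∀ s, π s ≠ πstar s)
    (Vπ : S → ℝ)
    (hVπ : ∀ s, Vπ s = r s (π s) + γ * ∑ s', p s (π s) s' * Vπ s')
    (hVπ0 : ∀ s, 0 ≤ Vπ s)
    (hgap : ∀ s a, a ≠ πstar s → 1 < V s - Q s a) :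
    False := by
  have h1γ : (0:ℝ) < 1 - γ := by linarith
  -- Bound: V is bounded above by 1/(1-γ)
  have hVub : ∀ s, V s ≤ 1 / (1 - γ) := by
    obtain ⟨s₁, -, hs₁⟩ := Finset.exists_max_image (Finset.univ : Finset S) V
      Finset.univ_nonempty
    intro s
    have hs : V s ≤ V s₁ := hs₁ s (Finset.mem_univ s)
    -- V s₁ = Q s₁ a for some a attaining the sup
    obtain ⟨a, -, ha⟩ := Finset.exists_mem_eq_sup' (Finset.univ_nonempty (α := A)) (Q s₁)
    have hVs₁ : V s₁ = Q s₁ a := by rw [hV s₁, ha]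
    have hsum : ∑ s', p s₁ a s' * V s' ≤ V s₁ := by
      calc ∑ s', p s₁ a s' * V s' ≤ ∑ s', p s₁ a s' * V s₁ := by
            apply Finset.sum_le_sum
            intro i _
            exact mul_le_mul_of_nonneg_left (hs₁ i (Finset.mem_univ i)) (hp0 s₁ a i)
        _ = V s₁ := by rw [← Finset.sum_mul, hp1, one_mul]
    have hr1 := (hr s₁ a).2
    have hmul := mul_le_mul_of_nonneg_left hsum hγ0
    have hub : V s₁ ≤ 1 + γ * V s₁ := by linarith [hQ s₁ a]
    have hV1 : V s₁ ≤ 1 / (1 - γ) := by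
      rw [le_div_iff₀ h1γ]; nlinarith
    linarith
  -- Take s₀ maximizing Vπ - V
  obtain ⟨s₀, -, hs₀⟩ := Finset.exists_max_image (Finset.univ : Finset S)
    (fun s => Vπ s - V s) Finset.univ_nonempty
  set f := fun s => Vπ s - V s with hf
  have hsum : ∑ s', p s₀ (π s₀) s' * Vπ s' ≤ (∑ s', p s₀ (π s₀) s' * V s') + f s₀ := by
    have : ∑ s', p s₀ (π s₀) s' * Vπ s' ≤ ∑ s', p s₀ (π s₀) s' * (V s' + f s₀) := by
      apply Finset.sum_le_sum
      intro i _
      apply mul_le_mul_of_nonneg_left _ (hp0 s₀ (π s₀) i)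
      have := hs₀ i (Finset.mem_univ i)
      simp only [hf] at this ⊢
      linarith
    calc ∑ s', p s₀ (π s₀) s' * Vπ s' ≤ ∑ s', p s₀ (π s₀) s' * (V s' + f s₀) := this
      _ = (∑ s', p s₀ (π s₀) s' * V s') + (∑ s', p s₀ (π s₀) s') * f s₀ := by
          simp [mul_add, Finset.sum_add_distrib, Finset.sum_mul]
      _ = (∑ s', p s₀ (π s₀) s' * V s') + f s₀ := by rw [hp1, one_mul]
  -- gap at s₀
  have hgap₀ : 1 < V s₀ - Q s₀ (π s₀) := hgap s₀ (π s₀) (hπ s₀)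
  have hQπ : Q s₀ (π s₀) = r s₀ (π s₀) + γ * ∑ s', p s₀ (π s₀) s' * V s' := hQ s₀ (π s₀)
  have hkey : f s₀ < -1 + γ * f s₀ := by
    have hmul := mul_le_mul_of_nonneg_left hsum hγ0
    rw [mul_add] at hmul
    simp only [hf] at hmul ⊢
    linarith [hVπ s₀, hQπ, hgap₀]
  have hflt : f s₀ < -(1 / (1 - γ)) := by
    rw [lt_neg, div_lt_iff₀ h1γ]
    nlinarith [hkey]
  have hfge : -(1 / (1 - γ)) ≤ f s₀ := by
    have h1 := hVπ0 s₀
    have h2 := hVub s₀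
    simp only [hf]
    linarith
  linarith
end

section
/- Let H_{sa} > 0 for each pair (s,a) with a ≠ π*(s), and H* > 0. Consider the optimization problem: minimize over ω in the simplex on S×A, subject to ω_{s,π*(s)} = ω₀ for all s, the objective max_{s,a≠π*(s)} H_{sa}/ω_{sa} + H*/(S·ω₀). Then the optimum is attained at ω̄_{sa} = H_{sa}/(Σ H + √(H*·Σ H)) for a ≠ π*(s) and ω̄_{s,π*(s)} = (1/S)·√(H*·Σ H)/(Σ H + √(H*·Σ H)) where Σ H = Σ_{s,a≠π*(s)} H_{sa}, and the optimal value is Σ H + H* + 2√(H*·Σ H), which is at most 2(Σ H + H*). -/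
/-!
Write `M` for the maximum of `H_{sa}/ω_{sa}` over the off-optimal pairs. Then `ω_{sa} ≥ H_{sa}/M`,
so the optimal pairs carry mass `S ω₀ ≤ 1 - ΣH/M`, and the objective is at least
`M + H* M/(M - ΣH)`. With `x = M - ΣH > 0` this is `ΣH + H* + x + H* ΣH/x`, which by AM-GM is
at least `ΣH + H* + 2√(H* ΣH)`, with equality at `x = √(H* ΣH)`: that is the allocation `ω̄`.
-/

open Finset Real

theorem Fintype.sum_sum_eq_sum_apply_add_sum_filter_ne {S A M : Type*} [Fintype S] [Fintype A]
    [DecidableEq A] [AddCommMonoid M] (σ : S → A) (f : S → A → M) :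
    ∑ s, ∑ a, f s a =
      ∑ s, f s (σ s) + ∑ q ∈ univ.filter (fun q : S × A => q.2 ≠ σ q.1), f q.1 q.2 := by
  have hoff : ∑ q ∈ univ.filter (fun q : S × A => q.2 ≠ σ q.1), f q.1 q.2
      = ∑ s, ∑ a ∈ univ.erase (σ s), f s a := by
    rw [← univ_product_univ, sum_filter, sum_product]
    refine Finset.sum_congr rfl fun s _ => ?_
    rw [← sum_filter]
    exact Finset.sum_congr (filter_ne' univ (σ s)) fun _ _ => rfl
  rw [hoff, ← sum_add_distrib]
  exact Finset.sum_congr rfl fun s _ => (add_sum_erase _ _ (mem_univ _)).symm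

theorem Fintype.sum_sum_eq_card_nsmul_add_sum_filter_ne {S A M : Type*} [Fintype S] [Fintype A]
    [DecidableEq A] [AddCommMonoid M] (σ : S → A) (f : S → A → M) {c : M}
    (hf : ∀ s, f s (σ s) = c) :
    ∑ s, ∑ a, f s a =
      Fintype.card S • c + ∑ q ∈ univ.filter (fun q : S × A => q.2 ≠ σ q.1), f q.1 q.2 := by
  rw [sum_sum_eq_sum_apply_add_sum_filter_ne σ, Finset.sum_congr rfl fun s _ => hf s, sum_const,
    Finset.card_univ]

theorem Finset.sum_div_le_sum_of_div_le {ι : Type*} {T : Finset ι} {f g : ι → ℝ} {M : ℝ}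
    (hg : ∀ i ∈ T, 0 < g i) (hM : 0 < M) (h : ∀ i ∈ T, f i / g i ≤ M) :
    (∑ i ∈ T, f i) / M ≤ ∑ i ∈ T, g i := by
  rw [sum_div]
  refine sum_le_sum fun i hi => ?_
  rw [div_le_iff₀ hM, mul_comm]
  exact (div_le_iff₀ (hg i hi)).1 (h i hi)

theorem add_add_two_mul_sqrt_le_add_div {a b M y : ℝ} (ha : 0 ≤ a) (hb : 0 ≤ b) (hM : 0 < M)
    (hy : 0 < y) (h : a / M + y ≤ 1) : a + b + 2 * √(b * a) ≤ M + b / y := by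
  have hx : 0 < M - a := by
    have : a / M < 1 := by linarith
    rwa [div_lt_one hM, ← sub_pos] at this
  have hyx : y ≤ (M - a) / M := by rw [sub_div, div_self hM.ne']; linarith
  have hr : √(b * a) ^ 2 = b * a := sq_sqrt (mul_nonneg hb ha)
  calc a + b + 2 * √(b * a) ≤ M + b / ((M - a) / M) := by
        rw [div_div_eq_mul_div, ← sub_le_iff_le_add', le_div_iff₀ hx]
        nlinarith [sq_nonneg (M - a - √(b * a))]
    _ ≤ M + b / y := by gcongr

theorem add_sqrt_add_div_div_add_sqrt {a b : ℝ} (ha : 0 < a) (hb : 0 < b) :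
    a + √(b * a) + b / (√(b * a) / (a + √(b * a))) = a + b + 2 * √(b * a) := by
  have hr : 0 < √(b * a) := sqrt_pos.2 (mul_pos hb ha)
  have hr2 : √(b * a) ^ 2 = b * a := sq_sqrt (mul_pos hb ha).le
  have : b / (√(b * a) / (a + √(b * a))) = √(b * a) + b := by
    rw [div_div_eq_mul_div, div_eq_iff hr.ne']
    linear_combination -hr2
  linarith

theorem add_add_two_mul_sqrt_le_two_mul_add {a b : ℝ} (ha : 0 ≤ a) (hb : 0 ≤ b) :
    a + b + 2 * √(b * a) ≤ 2 * (a + b) := by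
  have : √(b * a) ≤ (a + b) / 2 :=
    sqrt_le_iff.2 ⟨by linarith, by nlinarith [sq_nonneg (a - b)]⟩
  linarith

theorem Finset.sum_add_add_two_mul_sqrt_le_sup'_div_add_div {ι : Type*} {T : Finset ι}
    (hT : T.Nonempty) {H ω : ι → ℝ} {b c : ℝ} (hH : ∀ i ∈ T, 0 < H i) (hω : ∀ i ∈ T, 0 < ω i)
    (hb : 0 ≤ b) (hc : 0 < c) (hmass : c + ∑ i ∈ T, ω i = 1) :
    (∑ i ∈ T, H i) + b + 2 * √(b * ∑ i ∈ T, H i) ≤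
      T.sup' hT (fun i => H i / ω i) + b / c := by
  obtain ⟨i, hi⟩ := hT
  have hM : 0 < T.sup' ⟨i, hi⟩ (fun i => H i / ω i) :=
    (div_pos (hH i hi) (hω i hi)).trans_le (le_sup' (fun i => H i / ω i) hi)
  have hlow := sum_div_le_sum_of_div_le hω hM fun j hj => le_sup' (fun i => H i / ω i) hj
  exact add_add_two_mul_sqrt_le_add_div (sum_nonneg fun j hj => (hH j hj).le) hb hM hc
    (by linarith)

theorem allocation_optimum_general {S A : Type*} [Fintype S] [Fintype A] [Nonempty S]
    [DecidableEq A]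
    (πstar : S → A) (H : S → A → ℝ) (Hstar : ℝ)
    (hH : ∀ s a, a ≠ πstar s → 0 < H s a) (hHstar : 0 < Hstar)
    (hsub : (Finset.univ.filter (fun q : S × A => q.2 ≠ πstar q.1)).Nonempty) :
    let Sc : ℝ := (Fintype.card S : ℝ)
    let sumH : ℝ := ∑ q ∈ Finset.univ.filter (fun q : S × A => q.2 ≠ πstar q.1), H q.1 q.2
    let D : ℝ := sumH + Real.sqrt (Hstar * sumH)
    let ωbar : S → A → ℝ := fun s a =>
      if a = πstar s then (Real.sqrt (Hstar * sumH) / Sc) / D else H s a / D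
    let ωbar0 : ℝ := (Real.sqrt (Hstar * sumH) / Sc) / D
    let F : (S → A → ℝ) → ℝ → ℝ := fun ω ω0 =>
      (Finset.univ.filter (fun q : S × A => q.2 ≠ πstar q.1)).sup' hsub
          (fun q => H q.1 q.2 / ω q.1 q.2)
        + Hstar / (Sc * ω0)
    -- ω̄ is a feasible allocation
    ((∀ s a, 0 < ωbar s a) ∧ (∑ s, ∑ a, ωbar s a) = 1 ∧ (∀ s, ωbar s (πstar s) = ωbar0))
    -- ω̄ is optimal among feasible allocations
    ∧ (∀ (ω : S → A → ℝ) (ω0 : ℝ), (∀ s a, 0 < ω s a) → (∑ s, ∑ a, ω s a) = 1 →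
        (∀ s, ω s (πstar s) = ω0) → F ωbar ωbar0 ≤ F ω ω0)
    -- the optimal value
    ∧ F ωbar ωbar0 = sumH + Hstar + 2 * Real.sqrt (Hstar * sumH)
    ∧ sumH + Hstar + 2 * Real.sqrt (Hstar * sumH) ≤ 2 * (sumH + Hstar) := by
  intro Sc sumH D ωbar ωbar0 F
  have hHT : ∀ q ∈ univ.filter (fun q : S × A => q.2 ≠ πstar q.1), 0 < H q.1 q.2 :=
    fun q hq => hH _ _ (mem_filter.1 hq).2
  have hsumH : 0 < sumH := sum_pos hHT hsub
  have hSc : 0 < Sc := Nat.cast_pos.2 Fintype.card_pos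
  have hD : 0 < D := by positivity
  have hωbarT : ∀ q ∈ univ.filter (fun q : S × A => q.2 ≠ πstar q.1),
      ωbar q.1 q.2 = H q.1 q.2 / D := fun q hq => if_neg (mem_filter.1 hq).2
  have hωbar0 : Sc * ωbar0 = √(Hstar * sumH) / D := by
    simp only [ωbar0]
    field_simp
  have hsup : (univ.filter (fun q : S × A => q.2 ≠ πstar q.1)).sup' hsub
      (fun q => H q.1 q.2 / ωbar q.1 q.2) = D := by
    rw [sup'_congr hsub rfl fun q hq => by rw [hωbarT q hq, div_div_cancel₀ (hHT q hq).ne'],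
      sup'_const]
  have hval : F ωbar ωbar0 = sumH + Hstar + 2 * √(Hstar * sumH) := by
    simp only [F, hsup, hωbar0]
    exact add_sqrt_add_div_div_add_sqrt hsumH hHstar
  refine ⟨⟨fun s a => ?_, ?_, fun s => if_pos rfl⟩, fun ω ω0 hpos hsum hω0 => ?_, hval,
    add_add_two_mul_sqrt_le_two_mul_add hsumH.le hHstar.le⟩
  · simp only [ωbar]
    split_ifs with h
    · positivity
    · exact div_pos (hH s a h) hD
  · rw [Fintype.sum_sum_eq_card_nsmul_add_sum_filter_ne πstar ωbar fun s => if_pos rfl,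
      nsmul_eq_mul, hωbar0, sum_congr rfl hωbarT, ← sum_div, ← add_div, add_comm]
    exact div_self hD.ne'
  · have hmass :
        Sc * ω0 + ∑ q ∈ univ.filter (fun q : S × A => q.2 ≠ πstar q.1), ω q.1 q.2 = 1 := by
      rw [← hsum, Fintype.sum_sum_eq_card_nsmul_add_sum_filter_ne πstar ω hω0, nsmul_eq_mul]
    have hω0pos : 0 < ω0 := hω0 (Classical.arbitrary S) ▸ hpos _ _
    rw [hval]
    exact sum_add_add_two_mul_sqrt_le_sup'_div_add_div hsub hHT (fun q _ => hpos _ _)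
      hHstar.le (mul_pos hSc hω0pos) hmass

/-- explicit solution of the allocation optimization problem.  Over allocations
`ω` in the simplex on `S × A` that are constant (equal to `ω₀`) on the optimal pairs
`(s, π*(s))`, the objective `max_{s,a≠π*(s)} H_{sa}/ω_{sa} + H*/(S·ω₀)` is minimized by the
explicit allocation `ω̄`, with optimal value `sumH + H* + 2√(H*·sumH) ≤ 2(sumH + H*)`. -/
theorem allocation_optimum {S A : Type*} [Fintype S] [Fintype A] [Nonempty S] [Nonempty A]
    [DecidableEq A]
    (πstar : S → A) (H : S → A → ℝ) (Hstar : ℝ)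
    (hH : ∀ s a, a ≠ πstar s → 0 < H s a) (hHstar : 0 < Hstar)
    (hsub : (Finset.univ.filter (fun q : S × A => q.2 ≠ πstar q.1)).Nonempty) :
    let Sc : ℝ := (Fintype.card S : ℝ)
    let sumH : ℝ := ∑ q ∈ Finset.univ.filter (fun q : S × A => q.2 ≠ πstar q.1), H q.1 q.2
    let D : ℝ := sumH + Real.sqrt (Hstar * sumH)
    let ωbar : S → A → ℝ := fun s a =>
      if a = πstar s then (Real.sqrt (Hstar * sumH) / Sc) / D else H s a / D
    let ωbar0 : ℝ := (Real.sqrt (Hstar * sumH) / Sc) / D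
    let F : (S → A → ℝ) → ℝ → ℝ := fun ω ω0 =>
      (Finset.univ.filter (fun q : S × A => q.2 ≠ πstar q.1)).sup' hsub
          (fun q => H q.1 q.2 / ω q.1 q.2)
        + Hstar / (Sc * ω0)
    -- ω̄ is a feasible allocation
    ((∀ s a, 0 < ωbar s a) ∧ (∑ s, ∑ a, ωbar s a) = 1 ∧ (∀ s, ωbar s (πstar s) = ωbar0))
    -- ω̄ is optimal among feasible allocations
    ∧ (∀ (ω : S → A → ℝ) (ω0 : ℝ), (∀ s a, 0 < ω s a) → (∑ s, ∑ a, ω s a) = 1 →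
        (∀ s, ω s (πstar s) = ω0) → F ωbar ωbar0 ≤ F ω ω0)
    -- the optimal value
    ∧ F ωbar ωbar0 = sumH + Hstar + 2 * Real.sqrt (Hstar * sumH)
    ∧ sumH + Hstar + 2 * Real.sqrt (Hstar * sumH) ≤ 2 * (sumH + Hstar) :=
  allocation_optimum_general πstar H Hstar hH hHstar hsub
end

section
/- Let φ be a discounted MDP with unique optimal policy π*, and let ψ be an MDP obtained from φ by replacing the transition kernel and reward distribution at a single suboptimal pair (s, a) (a ≠ π*(s)) by those of (s, π*(s)) in φ, keeping everything else unchanged. Then π* remains an optimal policy of ψ, i.e., ψ ∉ Alt(φ); equivalently ψ lies in the closure of the complement of Alt(φ). -/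
open Finset

/-- Contraction-type comparison lemma: if `f s ≤ γ * ∑ s', p s s' * f s'` for a
stochastic `p` and `0 ≤ γ < 1`, then `f ≤ 0`. -/
lemma contraction_nonpos {S : Type*} [Fintype S] [Nonempty S]
    (γ : ℝ) (hγ0 : 0 ≤ γ) (hγ1 : γ < 1)
    (f : S → ℝ) (p : S → S → ℝ)
    (hp0 : ∀ s s', 0 ≤ p s s') (hp1 : ∀ s, ∑ s', p s s' = 1)
    (h : ∀ s, f s ≤ γ * ∑ s', p s s' * f s') : ∀ s, f s ≤ 0 := by
  set M := Finset.univ.sup' Finset.univ_nonempty f with hM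
  obtain ⟨s₁, -, hs₁⟩ := Finset.exists_mem_eq_sup' Finset.univ_nonempty f
  have hle : ∀ s, f s ≤ M := fun s => Finset.le_sup' f (Finset.mem_univ s)
  have hsum : ∑ s', p s₁ s' * f s' ≤ M := by
    calc ∑ s', p s₁ s' * f s' ≤ ∑ s', p s₁ s' * M :=
          Finset.sum_le_sum fun s' _ => mul_le_mul_of_nonneg_left (hle s') (hp0 s₁ s')
      _ = M := by rw [← Finset.sum_mul, hp1 s₁, one_mul]
  have hMle : M ≤ γ * M := by
    calc M = f s₁ := hM.trans hs₁
      _ ≤ γ * ∑ s', p s₁ s' * f s' := h s₁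
      _ ≤ γ * M := mul_le_mul_of_nonneg_left hsum hγ0
  have hM0 : M ≤ 0 := by nlinarith
  exact fun s => (hle s).trans hM0

/-- if `ψ` is obtained from `φ` by replacing the reward and transition kernel
at a single suboptimal pair `(s₀, a₀)` (with `a₀ ≠ π*(s₀)`) by those of `(s₀, π*(s₀))`,
then `π*` remains optimal in `ψ`: the value in `ψ` of any deterministic policy is dominated
by the value of `π*` in `ψ`. -/
theorem pistar_still_optimal_after_copying_kernel {S A : Type*}
    [Fintype S] [Fintype A] [Nonempty S] [Nonempty A] [DecidableEq S] [DecidableEq A]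
    (γ : ℝ) (hγ0 : 0 ≤ γ) (hγ1 : γ < 1)
    (rφ : S → A → ℝ) (hr : ∀ s a, rφ s a ∈ Set.Icc (0 : ℝ) 1)
    (pφ : S → A → S → ℝ) (hp0 : ∀ s a s', 0 ≤ pφ s a s') (hp1 : ∀ s a, ∑ s', pφ s a s' = 1)
    (Qφ : S → A → ℝ) (Vφ : S → ℝ)
    (hVφ : ∀ s, Vφ s = Finset.univ.sup' Finset.univ_nonempty (Qφ s))
    (hQφ : ∀ s a, Qφ s a = rφ s a + γ * ∑ s', pφ s a s' * Vφ s')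
    (πstar : S → A)
    (hopt : ∀ s, Qφ s (πstar s) = Vφ s)
    (huniq : ∀ s a, Qφ s a = Vφ s → a = πstar s)
    (s₀ : S) (a₀ : A) (ha₀ : a₀ ≠ πstar s₀) :
    let rψ : S → A → ℝ := fun s a => if s = s₀ ∧ a = a₀ then rφ s₀ (πstar s₀) else rφ s a
    let pψ : S → A → S → ℝ := fun s a => if s = s₀ ∧ a = a₀ then pφ s₀ (πstar s₀) else pφ s a
    ∀ (Vπ : S → ℝ),
      (∀ s, Vπ s = rψ s (πstar s) + γ * ∑ s', pψ s (πstar s) s' * Vπ s') →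
      ∀ (π' : S → A) (V' : S → ℝ),
        (∀ s, V' s = rψ s (π' s) + γ * ∑ s', pψ s (π' s) s' * V' s') →
        ∀ s, V' s ≤ Vπ s := by
  intro rψ pψ Vπ hVπ π' V' hV' s
  -- π* pairs are unchanged
  have hne : ∀ s, ¬(s = s₀ ∧ πstar s = a₀) := by
    rintro s ⟨rfl, h⟩; exact ha₀ h.symm
  have hrψπ : ∀ s, rψ s (πstar s) = rφ s (πstar s) := fun s => if_neg (hne s)
  have hpψπ : ∀ s, pψ s (πstar s) = pφ s (πstar s) := fun s => if_neg (hne s)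
  -- ψ kernels are stochastic
  have hpψ0 : ∀ s a s', 0 ≤ pψ s a s' := by
    intro s a s'; simp only [pψ]; split <;> apply hp0
  have hpψ1 : ∀ s a, ∑ s', pψ s a s' = 1 := by
    intro s a; simp only [pψ]; split <;> apply hp1
  have hsub : ∀ (p f g : S → ℝ), ∑ s', p s' * (f s' - g s')
      = ∑ s', p s' * f s' - ∑ s', p s' * g s' := by
    intro p f g
    rw [← Finset.sum_sub_distrib]
    exact Finset.sum_congr rfl fun s' _ => mul_sub _ _ _
  -- 1) Vπ = Vφ
  have hVφπ : ∀ s, Vφ s = rφ s (πstar s) + γ * ∑ s', pφ s (πstar s) s' * Vφ s' := by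
    intro s; rw [← hopt s, hQφ]
  have hdiff : ∀ s, Vπ s - Vφ s = γ * ∑ s', pφ s (πstar s) s' * (Vπ s' - Vφ s') := by
    intro s
    have := hVπ s
    rw [hrψπ s, hpψπ s] at this
    rw [this, hVφπ s, hsub (pφ s (πstar s)) Vπ Vφ]; ring
  have h1 : ∀ s, Vπ s - Vφ s ≤ 0 :=
    contraction_nonpos γ hγ0 hγ1 _ (fun s => pφ s (πstar s))
      (fun s => hp0 s (πstar s)) (fun s => hp1 s (πstar s))
      (fun s => le_of_eq (hdiff s))
  have h2 : ∀ s, Vφ s - Vπ s ≤ 0 :=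
    contraction_nonpos γ hγ0 hγ1 _ (fun s => pφ s (πstar s))
      (fun s => hp0 s (πstar s)) (fun s => hp1 s (πstar s))
      (fun s => by
        have h := hdiff s
        rw [hsub] at h ⊢
        apply le_of_eq; linarith)
  have hVπφ : ∀ s, Vπ s = Vφ s := fun s => le_antisymm
    (by linarith [h1 s]) (by linarith [h2 s])
  -- 2) Bellman inequality for ψ against Vφ
  have hbell : ∀ s a, rψ s a + γ * ∑ s', pψ s a s' * Vφ s' ≤ Vφ s := by
    intro s a
    by_cases h : s = s₀ ∧ a = a₀
    · simp only [rψ, pψ, if_pos h]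
      rw [← hQφ s₀ (πstar s₀), hopt s₀, h.1]
    · simp only [rψ, pψ, if_neg h]
      rw [← hQφ s a, hVφ s]
      exact Finset.le_sup' (Qφ s) (Finset.mem_univ a)
  -- 3) V' ≤ Vφ
  have h3 : ∀ s, V' s - Vφ s ≤ 0 := by
    refine contraction_nonpos γ hγ0 hγ1 _ (fun s => pψ s (π' s))
      (fun s => hpψ0 s (π' s)) (fun s => hpψ1 s (π' s)) ?_
    intro s
    have := hbell s (π' s)
    have hv := hV' s
    have : V' s - Vφ s ≤ (rψ s (π' s) + γ * ∑ s', pψ s (π' s) s' * V' s')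
        - (rψ s (π' s) + γ * ∑ s', pψ s (π' s) s' * Vφ s') := by linarith
    calc V' s - Vφ s ≤ _ := this
      _ = γ * ∑ s', pψ s (π' s) s' * (V' s' - Vφ s') := by
          rw [hsub (pψ s (π' s)) V' Vφ]; ring
  have := h3 s
  rw [hVπφ s]; linarith
end
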